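/- arXiv:2101.01953 — 4 statements merged into one kernel-verified Lean document; each statement's English description precedes it below -/
import Mathlib

section
/- Let f be a pseudo-Boolean constraint on a finite variable set X with positive integer weights and threshold θ. Let r be a rectangle with respect to a partition (X1, X2) of X such that every model of r is a model of f, and suppose r accepts at least one threshold model of f. Then there exist nonnegative integers θ1 and θ2 with θ1 + θ2 = θ such that every threshold model x of f accepted by r satisfies w(x|X1) = θ1 and w(x|X2) = θ2, where w(x|Xi) denotes the sum of the weights of the variables in Xi set to 1 in x. -/
/-- `g` depends only on the variables in `S`. -/
def DependsOnlyOn {X : Type*} (S : Finset X) (g : (X → Bool) → Bool) : Prop :=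
  ∀ x y : X → Bool, (∀ v ∈ S, x v = y v) → g x = g y

/-- `r` is a rectangle with respect to the partition `(X1, X2)` of the variable set. -/
def IsRectangle {X : Type*} [Fintype X] [DecidableEq X] (X1 X2 : Finset X)
    (r : (X → Bool) → Bool) : Prop :=
  X1 ∪ X2 = Finset.univ ∧ X1 ∩ X2 = ∅ ∧
    ∃ ρ1 ρ2 : (X → Bool) → Bool, DependsOnlyOn X1 ρ1 ∧ DependsOnlyOn X2 ρ2 ∧
      ∀ x, r x = (ρ1 x && ρ2 x)

/-- `r` is a rectangle with respect to some balanced partition. -/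
def IsBalancedRectangle {X : Type*} [Fintype X] [DecidableEq X]
    (r : (X → Bool) → Bool) : Prop :=
  ∃ X1 X2 : Finset X, IsRectangle X1 X2 r ∧
    Fintype.card X ≤ 3 * X1.card ∧ 3 * X1.card ≤ 2 * Fintype.card X

/-- A balanced rectangle cover of `f`: a finite list of balanced rectangles whose
disjunction is equivalent to `f`. -/
def IsBalancedRectangleCover {X : Type*} [Fintype X] [DecidableEq X]
    (L : List ((X → Bool) → Bool)) (f : (X → Bool) → Bool) : Prop :=
  (∀ r ∈ L, IsBalancedRectangle r) ∧
    ∀ x, f x = true ↔ ∃ r ∈ L, r x = true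

/-! Exchange argument: if `x` and `y` are models of the rectangle `r`, so is the assignment
that agrees with `x` on `X1` and with `y` on `X2`. Its weight `w(x|X1) + w(y|X2)` is at least
`θ = w(y|X1) + w(y|X2)` when `y` is a threshold model, so `w(y|X1) ≤ w(x|X1)`. Exchanging the
roles of two threshold models gives equality on `X1`, and then on `X2`. -/

open Finset

variable {X : Type*} [DecidableEq X]

def weightOn (w : X → ℕ) (S : Finset X) (x : X → Bool) : ℕ :=
  ∑ i ∈ S, if x i = true then w i else 0

theorem weightOn_piecewise_self (w : X → ℕ) (S : Finset X) (x y : X → Bool) :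
    weightOn w S (S.piecewise x y) = weightOn w S x :=
  sum_congr rfl fun i hi => by rw [S.piecewise_eq_of_mem x y hi]

theorem weightOn_piecewise_of_disjoint (w : X → ℕ) {S T : Finset X} (hST : Disjoint S T)
    (x y : X → Bool) : weightOn w T (S.piecewise x y) = weightOn w T y :=
  sum_congr rfl fun i hi => by rw [S.piecewise_eq_of_notMem x y (disjoint_right.mp hST hi)]

namespace IsRectangle

variable [Fintype X] {X1 X2 : Finset X} {r : (X → Bool) → Bool}

theorem disjoint (hr : IsRectangle X1 X2 r) : Disjoint X1 X2 :=
  disjoint_iff_inter_eq_empty.mpr hr.2.1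

theorem weightOn_add_weightOn (hr : IsRectangle X1 X2 r) (w : X → ℕ) (x : X → Bool) :
    weightOn w X1 x + weightOn w X2 x = weightOn w univ x := by
  rw [weightOn, weightOn, ← sum_union hr.disjoint, hr.1, weightOn]

theorem apply_piecewise (hr : IsRectangle X1 X2 r) {x y : X → Bool} (hx : r x = true)
    (hy : r y = true) : r (X1.piecewise x y) = true := by
  have hdisj := hr.disjoint
  obtain ⟨-, -, ρ1, ρ2, hρ1, hρ2, hrρ⟩ := hr
  have h1 : ρ1 (X1.piecewise x y) = ρ1 x :=
    hρ1 _ _ fun v hv => X1.piecewise_eq_of_mem x y hv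
  have h2 : ρ2 (X1.piecewise x y) = ρ2 y :=
    hρ2 _ _ fun v hv => X1.piecewise_eq_of_notMem x y (disjoint_right.mp hdisj hv)
  simp only [hrρ, Bool.and_eq_true] at hx hy ⊢
  rw [h1, h2]
  exact ⟨hx.1, hy.2⟩

variable {w : X → ℕ} {θ : ℕ}

theorem weightOn_left_le_of_threshold (hr : IsRectangle X1 X2 r)
    (hmodels : ∀ x, r x = true → θ ≤ weightOn w univ x) {x y : X → Bool}
    (hx : r x = true) (hy : r y = true) (hyθ : weightOn w univ y = θ) :
    weightOn w X1 y ≤ weightOn w X1 x := by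
  have hz := hmodels _ (hr.apply_piecewise hx hy)
  rw [← hr.weightOn_add_weightOn, weightOn_piecewise_self,
    weightOn_piecewise_of_disjoint w hr.disjoint] at hz
  have := hr.weightOn_add_weightOn w y
  omega

theorem weightOn_eq_of_threshold (hr : IsRectangle X1 X2 r)
    (hmodels : ∀ x, r x = true → θ ≤ weightOn w univ x) {x y : X → Bool}
    (hx : r x = true) (hy : r y = true) (hxθ : weightOn w univ x = θ)
    (hyθ : weightOn w univ y = θ) :
    weightOn w X1 x = weightOn w X1 y ∧ weightOn w X2 x = weightOn w X2 y := by
  have hxy := hr.weightOn_left_le_of_threshold hmodels hx hy hyθ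
  have hyx := hr.weightOn_left_le_of_threshold hmodels hy hx hxθ
  have := hr.weightOn_add_weightOn w x
  have := hr.weightOn_add_weightOn w y
  omega

end IsRectangle

theorem stmt3_general (m : ℕ) (w : Fin m → ℕ) (θ : ℕ)
    (X1 X2 : Finset (Fin m)) (r : (Fin m → Bool) → Bool)
    (hr : IsRectangle X1 X2 r)
    (hmodels : ∀ x, r x = true → θ ≤ ∑ i, if x i = true then w i else 0)
    (hthresh : ∃ x, r x = true ∧ (∑ i, if x i = true then w i else 0) = θ) :
    ∃ θ1 θ2 : ℕ, θ1 + θ2 = θ ∧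
      ∀ x, r x = true → (∑ i, if x i = true then w i else 0) = θ →
        (∑ i ∈ X1, if x i = true then w i else 0) = θ1 ∧
        (∑ i ∈ X2, if x i = true then w i else 0) = θ2 := by
  obtain ⟨x0, hrx0, hx0θ⟩ := hthresh
  refine ⟨weightOn w X1 x0, weightOn w X2 x0, (hr.weightOn_add_weightOn w x0).trans hx0θ, ?_⟩
  intro x hrx hxθ
  exact hr.weightOn_eq_of_threshold hmodels hrx hrx0 hxθ hx0θ

theorem stmt3 (m : ℕ) (w : Fin m → ℕ) (θ : ℕ) (hw : ∀ i, 0 < w i) (hθ : 0 < θ)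
    (X1 X2 : Finset (Fin m)) (r : (Fin m → Bool) → Bool)
    (hr : IsRectangle X1 X2 r)
    (hmodels : ∀ x, r x = true → θ ≤ ∑ i, if x i = true then w i else 0)
    (hthresh : ∃ x, r x = true ∧ (∑ i, if x i = true then w i else 0) = θ) :
    ∃ θ1 θ2 : ℕ, θ1 + θ2 = θ ∧
      ∀ x, r x = true → (∑ i, if x i = true then w i else 0) = θ →
        (∑ i ∈ X1, if x i = true then w i else 0) = θ1 ∧
        (∑ i ∈ X2, if x i = true then w i else 0) = θ2 :=
  stmt3_general m w θ X1 X2 r hr hmodels hthresh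
end

section
/- Let (X1, X2) be a partition of X_n and let x and y be maximal matching assignments. If the mixed assignment (x|X1, y|X2) has weight exactly 2^(2n) − 1 (with respect to the weights w_{i,j} = 2^(i−1) + 2^(n+j−1)), then (x|X1, y|X2) is a maximal matching assignment. -/
/-- The weight of an assignment to the `n × n` grid of variables, where variable `(i,j)`
(`0`-indexed) has weight `2 ^ i + 2 ^ (n + j)`. -/
def pbWeight (n : ℕ) (x : Fin n × Fin n → Bool) : ℕ :=
  ∑ p : Fin n × Fin n, if x p = true then 2 ^ (p.1 : ℕ) + 2 ^ (n + (p.2 : ℕ)) else 0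

/-- The pseudo-Boolean constraint `f_n`. -/
def fPB (n : ℕ) (x : Fin n × Fin n → Bool) : Bool :=
  decide (2 ^ (2 * n) - 1 ≤ pbWeight n x)

/-- A maximal matching assignment: the assignment is an `n × n` permutation matrix. -/
def IsMaximalMatching (n : ℕ) (x : Fin n × Fin n → Bool) : Prop :=
  (∀ i : Fin n, ∃! j : Fin n, x (i, j) = true) ∧
  (∀ j : Fin n, ∃! i : Fin n, x (i, j) = true)

/-- The mixed assignment agreeing with `x` on `X1` and with `y` outside `X1`. -/
def mix {n : ℕ} (X1 : Finset (Fin n × Fin n)) (x y : Fin n × Fin n → Bool) :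
    Fin n × Fin n → Bool :=
  fun p => if p ∈ X1 then x p else y p

/-!
The weight `Σ_{z(i,j)=1} (2^i + 2^(n+j))` of `z` is the base-2 number whose digit at position
`i` is the number of ones in row `i` of `z` and whose digit at position `n + j` is the number of
ones in column `j`. Each one of the mixed assignment `z` is a one of `x` or of `y`, and these are
permutation matrices, so every digit is at most `2`. The only such representation of `2^(2n) - 1`
has all digits equal to `1`, which says that `z` is a permutation matrix.
-/

open Finset

theorem digits_eq_pred_of_sum_eq_pow_sub_one {b : ℕ} (hb : 2 ≤ b) :
    ∀ {m : ℕ} (d : Fin m → ℕ), (∀ k, d k ≤ b) →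
      ∑ k, d k * b ^ (k : ℕ) = b ^ m - 1 → ∀ k, d k = b - 1
  | 0, _, _, _, k => k.elim0
  | m + 1, d, hd, hsum, k => by
    set S := ∑ k : Fin m, d k.succ * b ^ (k : ℕ)
    have hpow : 1 ≤ b ^ m := Nat.one_le_pow _ _ (by omega)
    have hsplit : d 0 + b * S + 1 = b * b ^ m := by
      have hshift : ∑ k : Fin m, d k.succ * b ^ (k.succ : ℕ) = b * S := by
        rw [mul_sum]
        exact sum_congr rfl fun k _ => by rw [Fin.val_succ, pow_succ]; ring
      rw [Fin.sum_univ_succ, hshift, Fin.val_zero, pow_zero, mul_one, pow_succ'] at hsum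
      have : 1 ≤ b * b ^ m := Nat.one_le_iff_ne_zero.mpr (by positivity)
      omega
    have hd0 := hd 0
    -- `b * b ^ m - b * S` is a multiple of `b` in `[1, b + 1]`, hence equals `b`.
    have hS : S = b ^ m - 1 := by
      have hlt : S < b ^ m := by nlinarith
      have hge : b ^ m ≤ S + 1 := by nlinarith
      omega
    cases k using Fin.cases with
    | zero =>
      have : b * S + b = b * b ^ m := by rw [hS, ← Nat.mul_succ]; congr 1; omega
      omega
    | succ k => exact digits_eq_pred_of_sum_eq_pow_sub_one hb (fun k => d k.succ) (fun k => hd _) hS k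

lemma mix_eq_true {n : ℕ} {X1 : Finset (Fin n × Fin n)} {x y : Fin n × Fin n → Bool}
    {p : Fin n × Fin n} (h : mix X1 x y p = true) : x p = true ∨ y p = true := by
  unfold mix at h
  split_ifs at h <;> simp [h]

lemma card_filter_le_two_of_existsUnique {α : Type*} [Fintype α] {f g h : α → Bool}
    (hfg : ∀ a, h a = true → f a = true ∨ g a = true)
    (hf : ∃! a, f a = true) (hg : ∃! a, g a = true) : #{a | h a = true} ≤ 2 := by
  classical
  rw [Fintype.existsUnique_iff_card_one] at hf hg
  calc #{a | h a = true}
      ≤ #(({a | f a = true} : Finset α) ∪ ({a | g a = true} : Finset α)) :=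
        card_le_card fun a ha => by simpa using hfg a (by simpa using ha)
    _ ≤ #{a | f a = true} + #{a | g a = true} := card_union_le _ _
    _ = 2 := by rw [hf, hg]

def lineCounts (n : ℕ) (z : Fin n × Fin n → Bool) : Fin (n + n) → ℕ :=
  Fin.append (fun i => #{j | z (i, j) = true}) (fun j => #{i | z (i, j) = true})

lemma isMaximalMatching_iff_lineCounts_eq_one {n : ℕ} {z : Fin n × Fin n → Bool} :
    IsMaximalMatching n z ↔ ∀ k, lineCounts n z k = 1 := by
  simp only [IsMaximalMatching, Fintype.existsUnique_iff_card_one, Fin.forall_fin_add,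
    lineCounts, Fin.append_left, Fin.append_right]

lemma pbWeight_eq_sum_lineCounts (n : ℕ) (z : Fin n × Fin n → Bool) :
    pbWeight n z = ∑ k, lineCounts n z k * 2 ^ (k : ℕ) := by
  have hcount (s : Finset (Fin n)) (p : Fin n → Prop) [DecidablePred p] (w : ℕ) :
      ∑ a ∈ s, (if p a then w else 0) = #{a ∈ s | p a} * w := by
    rw [← sum_filter, sum_const, smul_eq_mul]
  rw [pbWeight, Fintype.sum_prod_type, Fin.sum_univ_add]
  simp only [lineCounts, Fin.append_left, Fin.append_right, Fin.val_castAdd, Fin.val_natAdd,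
    ite_add_zero, sum_add_distrib]
  congr 1
  · exact sum_congr rfl fun i _ => hcount _ _ _
  · rw [sum_comm]
    exact sum_congr rfl fun j _ => hcount _ _ _

theorem stmt6_general (n : ℕ) (X1 : Finset (Fin n × Fin n))
    (x y : Fin n × Fin n → Bool)
    (hx : IsMaximalMatching n x) (hy : IsMaximalMatching n y)
    (hxy : pbWeight n (mix X1 x y) = 2 ^ (2 * n) - 1) :
    IsMaximalMatching n (mix X1 x y) := by
  have hdigits : ∀ k, lineCounts n (mix X1 x y) k ≤ 2 := by
    refine Fin.addCases (fun i => ?_) (fun j => ?_)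
    · rw [lineCounts, Fin.append_left]
      exact card_filter_le_two_of_existsUnique (fun _ => mix_eq_true) (hx.1 i) (hy.1 i)
    · rw [lineCounts, Fin.append_right]
      exact card_filter_le_two_of_existsUnique (fun _ => mix_eq_true) (hx.2 j) (hy.2 j)
  rw [pbWeight_eq_sum_lineCounts, two_mul] at hxy
  exact isMaximalMatching_iff_lineCounts_eq_one.mpr
    (digits_eq_pred_of_sum_eq_pow_sub_one le_rfl _ hdigits hxy)

theorem stmt6 (n : ℕ) (hn : 1 ≤ n) (X1 X2 : Finset (Fin n × Fin n))
    (hunion : X1 ∪ X2 = Finset.univ) (hinter : X1 ∩ X2 = ∅)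
    (x y : Fin n × Fin n → Bool)
    (hx : IsMaximalMatching n x) (hy : IsMaximalMatching n y)
    (hxy : pbWeight n (mix X1 x y) = 2 ^ (2 * n) - 1) :
    IsMaximalMatching n (mix X1 x y) :=
  stmt6_general n X1 x y hx hy hxy
end

section
/- For every n ≥ 1, C(f_n) ≥ C(f̂_n): the minimum size of a balanced rectangle cover of the pseudo-Boolean constraint f_n is at least the minimum size of a balanced rectangle cover of the function f̂_n whose models are exactly the maximal matching assignments. -/
open Classical in
/-- The Boolean function `f̂_n` whose models are exactly the maximal matching assignments. -/
noncomputable def fMM (n : ℕ) (x : Fin n × Fin n → Bool) : Bool :=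
  decide (IsMaximalMatching n x)

open Finset

theorem sum_mul_two_pow_eq_two_pow_sub_one_iff {m : ℕ} {r : Fin m → ℕ} (hr : ∀ i, r i ≤ 2) :
    ∑ i, r i * 2 ^ (i : ℕ) = 2 ^ m - 1 ↔ ∀ i, r i = 1 := by
  induction m with
  | zero => simp
  | succ m ih =>
    have hsum : ∑ i, r i * 2 ^ (i : ℕ) = r 0 + 2 * ∑ i : Fin m, r i.succ * 2 ^ (i : ℕ) := by
      rw [Fin.sum_univ_succ, mul_sum]
      simp only [Fin.val_zero, pow_zero, mul_one, Fin.val_succ, pow_succ]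
      congr 1
      exact sum_congr rfl fun _ _ => by ring
    rw [hsum, Fin.forall_fin_succ, ← ih fun i => hr i.succ, pow_succ]
    have := hr 0
    have := Nat.one_le_two_pow (n := m)
    omega

def rowCount {n : ℕ} (x : Fin n × Fin n → Bool) (i : Fin n) : ℕ := #{j | x (i, j) = true}

def colCount {n : ℕ} (x : Fin n × Fin n → Bool) (j : Fin n) : ℕ := #{i | x (i, j) = true}

theorem pbWeight_eq_sum_append (n : ℕ) (x : Fin n × Fin n → Bool) :
    pbWeight n x = ∑ k : Fin (n + n), Fin.append (rowCount x) (colCount x) k * 2 ^ (k : ℕ) := by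
  rw [Fin.sum_univ_add]
  simp only [pbWeight, Fin.append_left, Fin.append_right, Fin.val_castAdd, Fin.val_natAdd,
    rowCount, colCount, card_filter, sum_mul, boole_mul, ite_add_zero, sum_add_distrib, pow_add]
  rw [Fintype.sum_prod_type, Fintype.sum_prod_type_right]

theorem isMaximalMatching_iff_rowCount_colCount {n : ℕ} (x : Fin n × Fin n → Bool) :
    IsMaximalMatching n x ↔ (∀ i, rowCount x i = 1) ∧ ∀ j, colCount x j = 1 := by
  simp only [IsMaximalMatching, rowCount, colCount, Fintype.existsUnique_iff_card_one]

theorem isMaximalMatching_iff_pbWeight {n : ℕ} {x : Fin n × Fin n → Bool}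
    (hrow : ∀ i, rowCount x i ≤ 2) (hcol : ∀ j, colCount x j ≤ 2) :
    IsMaximalMatching n x ↔ pbWeight n x = 2 ^ (2 * n) - 1 := by
  have hdigit : ∀ k, Fin.append (rowCount x) (colCount x) k ≤ 2 :=
    Fin.addCases (fun i => (Fin.append_left _ _ i).trans_le (hrow i))
      fun j => (Fin.append_right _ _ j).trans_le (hcol j)
  rw [pbWeight_eq_sum_append, two_mul, sum_mul_two_pow_eq_two_pow_sub_one_iff hdigit,
    Fin.forall_fin_add, isMaximalMatching_iff_rowCount_colCount]
  simp only [Fin.append_left, Fin.append_right]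

theorem card_filter_le_card_filter_add_card_filter {ι : Type*} [Fintype ι] {p q r : ι → Prop}
    [DecidablePred p] [DecidablePred q] [DecidablePred r] (h : ∀ i, r i → p i ∨ q i) :
    #{i | r i} ≤ #{i | p i} + #{i | q i} := by
  classical
  calc #{i | r i} ≤ #(univ.filter p ∪ univ.filter q) :=
        card_le_card fun i hi => by simpa [mem_union] using h i (mem_filter.mp hi).2
    _ ≤ _ := card_union_le _ _

theorem eq_true_or_eq_true_of_piecewise_eq_true {X : Type*} [DecidableEq X] (s : Finset X)
    {y₁ y₂ : X → Bool} {v : X} : s.piecewise y₁ y₂ v = true → y₁ v = true ∨ y₂ v = true :=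
  s.piecewise_cases y₁ y₂ (fun b => b = true → y₁ v = true ∨ y₂ v = true) Or.inl Or.inr

section Mixing

variable {n : ℕ} (s : Finset (Fin n × Fin n)) {y₁ y₂ : Fin n × Fin n → Bool}

theorem rowCount_piecewise_le (i : Fin n) :
    rowCount (s.piecewise y₁ y₂) i ≤ rowCount y₁ i + rowCount y₂ i :=
  card_filter_le_card_filter_add_card_filter fun _ => eq_true_or_eq_true_of_piecewise_eq_true s

theorem colCount_piecewise_le (j : Fin n) :
    colCount (s.piecewise y₁ y₂) j ≤ colCount y₁ j + colCount y₂ j :=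
  card_filter_le_card_filter_add_card_filter fun _ => eq_true_or_eq_true_of_piecewise_eq_true s

theorem pbWeight_piecewise_add_pbWeight_piecewise :
    pbWeight n (s.piecewise y₁ y₂) + pbWeight n (s.piecewise y₂ y₁) =
      pbWeight n y₁ + pbWeight n y₂ := by
  simp only [pbWeight, ← sum_add_distrib]
  refine sum_congr rfl fun v _ => ?_
  by_cases hv : v ∈ s <;> simp [hv, add_comm]

theorem IsMaximalMatching.pbWeight_eq {x : Fin n × Fin n → Bool} (hx : IsMaximalMatching n x) :
    pbWeight n x = 2 ^ (2 * n) - 1 := by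
  have ⟨hrow, hcol⟩ := (isMaximalMatching_iff_rowCount_colCount x).mp hx
  exact (isMaximalMatching_iff_pbWeight (fun i => (hrow i).trans_le one_le_two)
    fun j => (hcol j).trans_le one_le_two).mp hx

theorem IsMaximalMatching.piecewise (h₁ : IsMaximalMatching n y₁) (h₂ : IsMaximalMatching n y₂)
    (h₁₂ : fPB n (s.piecewise y₁ y₂) = true) (h₂₁ : fPB n (s.piecewise y₂ y₁) = true) :
    IsMaximalMatching n (s.piecewise y₁ y₂) := by
  have ⟨hrow₁, hcol₁⟩ := (isMaximalMatching_iff_rowCount_colCount _).mp h₁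
  have ⟨hrow₂, hcol₂⟩ := (isMaximalMatching_iff_rowCount_colCount _).mp h₂
  refine (isMaximalMatching_iff_pbWeight (fun i => ?_) fun j => ?_).mpr ?_
  · exact (rowCount_piecewise_le s i).trans (by rw [hrow₁, hrow₂])
  · exact (colCount_piecewise_le s j).trans (by rw [hcol₁, hcol₂])
  · have hsum := pbWeight_piecewise_add_pbWeight_piecewise s (y₁ := y₁) (y₂ := y₂)
    rw [h₁.pbWeight_eq, h₂.pbWeight_eq] at hsum
    simp only [fPB, decide_eq_true_eq] at h₁₂ h₂₁
    omega

end Mixing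

section Rectangle

variable {X : Type*} [Fintype X] [DecidableEq X] {X1 X2 : Finset X}

theorem isRectangle_iff_piecewise (hU : X1 ∪ X2 = univ) (hI : X1 ∩ X2 = ∅)
    {g : (X → Bool) → Bool} :
    IsRectangle X1 X2 g ↔
      ∀ y₁ y₂, g y₁ = true → g y₂ = true → g (X1.piecewise y₁ y₂) = true := by
  constructor
  · rintro ⟨-, -, ρ₁, ρ₂, hρ₁, hρ₂, hg⟩ y₁ y₂ h₁ h₂
    have hX2 : ∀ v ∈ X2, v ∉ X1 := fun v hv₂ hv₁ => by
      simpa [hI] using mem_inter.mpr ⟨hv₁, hv₂⟩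
    simp only [hg, Bool.and_eq_true] at h₁ h₂ ⊢
    rw [hρ₁ _ y₁ fun v hv => piecewise_eq_of_mem _ _ _ hv,
      hρ₂ _ y₂ fun v hv => piecewise_eq_of_notMem _ _ _ (hX2 v hv)]
    exact ⟨h₁.1, h₂.2⟩
  · intro hg
    classical
    -- `z` lies in `g` iff its restriction to each block extends to some model of `g`
    let ρ (S : Finset X) (z : X → Bool) : Bool := decide (∃ y, g y = true ∧ ∀ v ∈ S, y v = z v)
    have hρ (S : Finset X) : DependsOnlyOn S (ρ S) := fun a b hab => by
      simp only [ρ, decide_eq_decide]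
      exact exists_congr fun y => and_congr_right' <| forall₂_congr fun v hv => by rw [hab v hv]
    refine ⟨hU, hI, ρ X1, ρ X2, hρ X1, hρ X2, fun z => ?_⟩
    rw [Bool.eq_iff_iff, Bool.and_eq_true, decide_eq_true_iff, decide_eq_true_iff]
    refine ⟨fun hz => ⟨⟨z, hz, fun _ _ => rfl⟩, ⟨z, hz, fun _ _ => rfl⟩⟩, ?_⟩
    rintro ⟨⟨y₁, h₁, hy₁⟩, ⟨y₂, h₂, hy₂⟩⟩
    have hz : X1.piecewise y₁ y₂ = z := funext fun v => by
      by_cases hv : v ∈ X1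
      · rw [piecewise_eq_of_mem _ _ _ hv, hy₁ v hv]
      · have hv₂ : v ∈ X2 := by simpa [hv] using hU.ge (mem_univ v)
        rw [piecewise_eq_of_notMem _ _ _ hv, hy₂ v hv₂]
    exact hz ▸ hg y₁ y₂ h₁ h₂

end Rectangle

theorem IsRectangle.and_fMM {n : ℕ} {X1 X2 : Finset (Fin n × Fin n)}
    {r : (Fin n × Fin n → Bool) → Bool} (hr : IsRectangle X1 X2 r)
    (hrf : ∀ x, r x = true → fPB n x = true) :
    IsRectangle X1 X2 fun x => r x && fMM n x := by
  have hpw := (isRectangle_iff_piecewise hr.1 hr.2.1).mp hr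
  refine (isRectangle_iff_piecewise hr.1 hr.2.1).mpr fun y₁ y₂ h₁ h₂ => ?_
  simp only [fMM, Bool.and_eq_true, decide_eq_true_eq] at h₁ h₂ ⊢
  have h₁₂ := hpw y₁ y₂ h₁.1 h₂.1
  have h₂₁ := hpw y₂ y₁ h₂.1 h₁.1
  exact ⟨h₁₂, h₁.2.piecewise X1 h₂.2 (hrf _ h₁₂) (hrf _ h₂₁)⟩

theorem stmt8_general (n : ℕ)
    (L : List ((Fin n × Fin n → Bool) → Bool))
    (hL : IsBalancedRectangleCover L (fPB n)) :
    ∃ L' : List ((Fin n × Fin n → Bool) → Bool),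
      IsBalancedRectangleCover L' (fMM n) ∧ L'.length ≤ L.length := by
  obtain ⟨hrect, hcov⟩ := hL
  have hrf : ∀ r ∈ L, ∀ x, r x = true → fPB n x = true :=
    fun r hr x hx => (hcov x).mpr ⟨r, hr, hx⟩
  refine ⟨L.map fun r x => r x && fMM n x, ⟨?_, fun x => ?_⟩, (L.length_map _).le⟩
  · simp only [List.forall_mem_map]
    intro r hr
    obtain ⟨X1, X2, hrX, hbal⟩ := hrect r hr
    exact ⟨X1, X2, hrX.and_fMM (hrf r hr), hbal⟩
  · simp only [List.mem_map, exists_exists_and_eq_and, Bool.and_eq_true]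
    refine ⟨fun hx => ?_, fun ⟨_, _, _, hx⟩ => hx⟩
    have hmm : IsMaximalMatching n x := by simpa [fMM] using hx
    have hfx : fPB n x = true := by simp [fPB, hmm.pbWeight_eq]
    obtain ⟨r, hr, hrx⟩ := (hcov x).mp hfx
    exact ⟨r, hr, hrx, hx⟩

theorem stmt8 (n : ℕ) (hn : 1 ≤ n)
    (L : List ((Fin n × Fin n → Bool) → Bool))
    (hL : IsBalancedRectangleCover L (fPB n)) :
    ∃ L' : List ((Fin n × Fin n → Bool) → Bool),
      IsBalancedRectangleCover L' (fMM n) ∧ L'.length ≤ L.length :=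
  stmt8_general n L hL
end

section
/- Let r = ρ1 ∧ ρ2 be a satisfiable rectangle with respect to a partition (X1, X2) of X_n such that every model of r is a maximal matching assignment, and let U1 = {i : some model of ρ1 sets some variable x_{i,j} ∈ X1 to 1}. Then the number of models of r satisfies |r⁻¹(1)| ≤ |U1|! · (n − |U1|)!. -/
open Equiv Finset
open scoped Nat

theorem ncard_setOf_perm_mem_iff_le {α : Type*} [Fintype α] (U V : Set α) :
    {σ : Perm α | ∀ a, a ∈ U ↔ σ a ∈ V}.ncard ≤ U.ncard ! * (Fintype.card α - U.ncard)! := by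
  classical
  set S := {σ : Perm α | ∀ a, a ∈ U ↔ σ a ∈ V}
  obtain hS | ⟨σ₀, hσ₀⟩ := S.eq_empty_or_nonempty
  · simp [hS]
  let restrict : S → (U ≃ V) × (↥Uᶜ ≃ ↥Vᶜ) := fun σ =>
    (σ.1.subtypeEquiv σ.2, σ.1.subtypeEquiv fun a => not_congr (σ.2 a))
  have restrict_injective : Function.Injective restrict := by
    intro σ τ h
    refine Subtype.ext (Equiv.ext fun a => ?_)
    by_cases ha : a ∈ U
    · exact congrArg (fun e => (e.1 ⟨a, ha⟩ : α)) h
    · exact congrArg (fun e => (e.2 ⟨a, ha⟩ : α)) h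
  calc S.ncard = Nat.card S := (Nat.card_coe_set_eq S).symm
    _ ≤ Nat.card ((U ≃ V) × (↥Uᶜ ≃ ↥Vᶜ)) := Nat.card_le_card_of_injective _ restrict_injective
    _ = (Fintype.card U)! * (Fintype.card ↥Uᶜ)! := by
      rw [Nat.card_prod, Nat.card_eq_fintype_card, Nat.card_eq_fintype_card,
        Fintype.card_equiv (σ₀.subtypeEquiv hσ₀),
        Fintype.card_equiv (σ₀.subtypeEquiv fun a => not_congr (hσ₀ a))]
    _ = U.ncard ! * (Fintype.card α - U.ncard)! := by
      rw [Fintype.card_compl_set, Set.ncard_eq_toFinset_card', Set.toFinset_card]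

def permAssignment {α : Type*} [DecidableEq α] (σ : Perm α) (p : α × α) : Bool :=
  decide (σ p.1 = p.2)

theorem permAssignment_eq_true {α : Type*} [DecidableEq α] {σ : Perm α} {p : α × α} :
    permAssignment σ p = true ↔ σ p.1 = p.2 :=
  decide_eq_true_iff

theorem eq_of_permAssignment_of_line {α : Type*} [DecidableEq α] {σ : Perm α} {p q : α × α}
    (hp : permAssignment σ p = true) (hq : permAssignment σ q = true)
    (hline : p.1 = q.1 ∨ p.2 = q.2) : p = q := by
  rw [permAssignment_eq_true] at hp hq
  rcases hline with h | h
  · exact Prod.ext h (by rw [← hp, ← hq, h])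
  · exact Prod.ext (σ.injective (by rw [hp, hq, h])) h

theorem IsMaximalMatching.exists_permAssignment_eq {n : ℕ} {x : Fin n × Fin n → Bool}
    (hx : IsMaximalMatching n x) : ∃ σ : Perm (Fin n), permAssignment σ = x := by
  choose f hf using fun i => (hx.1 i).exists
  have hf_injective : f.Injective := fun i i' h =>
    (hx.2 (f i)).unique (hf i) (h ▸ hf i')
  refine ⟨Equiv.ofBijective f hf_injective.bijective_of_finite, funext fun ⟨i, j⟩ => ?_⟩
  rw [Bool.eq_iff_iff, permAssignment_eq_true]
  exact ⟨fun h : f i = j => h ▸ hf i, fun h => ((hx.1 i).unique (hf i) h)⟩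

theorem DependsOnlyOn.and_piecewise {X : Type*} [DecidableEq X] {X1 X2 : Finset X}
    {ρ1 ρ2 : (X → Bool) → Bool} (hρ1 : DependsOnlyOn X1 ρ1) (hρ2 : DependsOnlyOn X2 ρ2)
    (hdisj : Disjoint X1 X2) (x y : X → Bool) :
    (ρ1 (X1.piecewise x y) && ρ2 (X1.piecewise x y)) = (ρ1 x && ρ2 y) := by
  rw [hρ1 _ x fun v hv => piecewise_eq_of_mem _ _ _ hv,
    hρ2 _ y fun v hv => piecewise_eq_of_notMem _ _ _ (disjoint_right.mp hdisj hv)]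

/-- The set `U1` of the statement; `coveredCols` is its column analogue `V1`. -/
def coveredRows {α : Type*} (X1 : Finset (α × α)) (ρ1 : (α × α → Bool) → Bool) : Set α :=
  {i | ∃ j, (i, j) ∈ X1 ∧ ∃ x, ρ1 x = true ∧ x (i, j) = true}

def coveredCols {α : Type*} (X1 : Finset (α × α)) (ρ1 : (α × α → Bool) → Bool) : Set α :=
  {j | ∃ i, (i, j) ∈ X1 ∧ ∃ x, ρ1 x = true ∧ x (i, j) = true}

section Rectangle

variable {α : Type*} [DecidableEq α] {X1 X2 : Finset (α × α)} {ρ1 ρ2 : (α × α → Bool) → Bool}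
  (hρ1 : DependsOnlyOn X1 ρ1) (hρ2 : DependsOnlyOn X2 ρ2) (hdisj : Disjoint X1 X2)
  (hperm : ∀ x, (ρ1 x && ρ2 x) = true → ∃ σ : Perm α, permAssignment σ = x)
include hρ1 hρ2 hdisj hperm

theorem mem_of_line_of_mem {x z : α × α → Bool} {p q : α × α} (hx : ρ1 x = true)
    (hp : p ∈ X1) (hxp : x p = true) (hz : (ρ1 z && ρ2 z) = true) (hzq : z q = true)
    (hline : p.1 = q.1 ∨ p.2 = q.2) : q ∈ X1 := by
  by_contra hq
  have hz2 : ρ2 z = true := (Bool.and_eq_true _ _).mp hz |>.2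
  obtain ⟨τ, hτ⟩ := hperm (X1.piecewise x z) (by rw [hρ1.and_piecewise hρ2 hdisj, hx, hz2]; rfl)
  have hτp : permAssignment τ p = true := by rw [hτ, piecewise_eq_of_mem _ _ _ hp, hxp]
  have hτq : permAssignment τ q = true := by rw [hτ, piecewise_eq_of_notMem _ _ _ hq, hzq]
  exact hq (eq_of_permAssignment_of_line hτp hτq hline ▸ hp)

variable {σ : Perm α} (hσ : (ρ1 (permAssignment σ) && ρ2 (permAssignment σ)) = true)
include hσ

theorem mem_coveredRows_iff (i : α) : i ∈ coveredRows X1 ρ1 ↔ (i, σ i) ∈ X1 := by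
  constructor
  · rintro ⟨j, hj, x, hx, hxj⟩
    exact mem_of_line_of_mem hρ1 hρ2 hdisj hperm hx hj hxj hσ (permAssignment_eq_true.mpr rfl)
      (Or.inl rfl)
  · exact fun h => ⟨σ i, h, _, ((Bool.and_eq_true _ _).mp hσ).1, permAssignment_eq_true.mpr rfl⟩

theorem apply_mem_coveredCols_iff (i : α) : σ i ∈ coveredCols X1 ρ1 ↔ (i, σ i) ∈ X1 := by
  constructor
  · rintro ⟨i', hi', x, hx, hxi'⟩
    exact mem_of_line_of_mem hρ1 hρ2 hdisj hperm hx hi' hxi' hσ (permAssignment_eq_true.mpr rfl)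
      (Or.inr rfl)
  · exact fun h => ⟨i, h, _, ((Bool.and_eq_true _ _).mp hσ).1, permAssignment_eq_true.mpr rfl⟩

end Rectangle

theorem stmt13_general (n : ℕ) (X1 X2 : Finset (Fin n × Fin n))
    (hinter : X1 ∩ X2 = ∅)
    (ρ1 ρ2 r : (Fin n × Fin n → Bool) → Bool)
    (hρ1 : DependsOnlyOn X1 ρ1) (hρ2 : DependsOnlyOn X2 ρ2)
    (hrdef : ∀ x, r x = (ρ1 x && ρ2 x))
    (hmodels : ∀ x, r x = true → IsMaximalMatching n x)
    (U1 : Set (Fin n))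
    (hU1 : U1 = {i | ∃ j, (i, j) ∈ X1 ∧ ∃ x, ρ1 x = true ∧ x (i, j) = true}) :
    ({x | r x = true} : Set (Fin n × Fin n → Bool)).ncard ≤
      Nat.factorial U1.ncard * Nat.factorial (n - U1.ncard) := by
  obtain rfl : r = fun x => ρ1 x && ρ2 x := funext hrdef
  change U1 = coveredRows X1 ρ1 at hU1
  subst hU1
  have hdisj : Disjoint X1 X2 := disjoint_iff_inter_eq_empty.mpr hinter
  have hperm x (hx : (ρ1 x && ρ2 x) = true) : ∃ σ : Perm (Fin n), permAssignment σ = x :=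
    (hmodels x hx).exists_permAssignment_eq
  have models_subset : {x | (ρ1 x && ρ2 x) = true} ⊆ permAssignment ''
      {σ | ∀ i, i ∈ coveredRows X1 ρ1 ↔ σ i ∈ coveredCols X1 ρ1} := by
    intro x hx
    obtain ⟨σ, rfl⟩ := hperm x hx
    refine ⟨σ, fun i => ?_, rfl⟩
    rw [mem_coveredRows_iff hρ1 hρ2 hdisj hperm hx,
      apply_mem_coveredCols_iff hρ1 hρ2 hdisj hperm hx]
  calc _ ≤ _ := Set.ncard_le_ncard models_subset (Set.toFinite _)
    _ ≤ _ := Set.ncard_image_le (Set.toFinite _)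
    _ ≤ _ := by
      simpa only [Fintype.card_fin] using
        ncard_setOf_perm_mem_iff_le (coveredRows X1 ρ1) (coveredCols X1 ρ1)

theorem stmt13 (n : ℕ) (hn : 1 ≤ n) (X1 X2 : Finset (Fin n × Fin n))
    (hunion : X1 ∪ X2 = Finset.univ) (hinter : X1 ∩ X2 = ∅)
    (ρ1 ρ2 r : (Fin n × Fin n → Bool) → Bool)
    (hρ1 : DependsOnlyOn X1 ρ1) (hρ2 : DependsOnlyOn X2 ρ2)
    (hrdef : ∀ x, r x = (ρ1 x && ρ2 x))
    (hsat : ∃ x, r x = true)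
    (hmodels : ∀ x, r x = true → IsMaximalMatching n x)
    (U1 : Set (Fin n))
    (hU1 : U1 = {i | ∃ j, (i, j) ∈ X1 ∧ ∃ x, ρ1 x = true ∧ x (i, j) = true}) :
    ({x | r x = true} : Set (Fin n × Fin n → Bool)).ncard ≤
      Nat.factorial U1.ncard * Nat.factorial (n - U1.ncard) :=
  stmt13_general n X1 X2 hinter ρ1 ρ2 r hρ1 hρ2 hrdef hmodels U1 hU1
end
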